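/- arXiv:2204.01496 — 6 statements merged into one kernel-verified Lean document; each statement's English description precedes it below -/
import Mathlib

section
/- Let G and H be topological groups and let Γ be a discrete subgroup of G × H such that the coordinate projection π_G : G × H → G is injective on Γ and the image of Γ under the coordinate projection π_H : G × H → H is dense in H. Let W ⊆ H be a compact symmetric neighborhood of the identity and set Λ := π_G((G × W) ∩ Γ). Then for all compact subsets I, K ⊆ H there exist finite sets E, F ⊆ π_G(Γ) such that for every subset Π ⊆ G one has π_G(Γ · (Π × K) ∩ (G × I)) ⊆ Λ · F · Π and π_G(Γ · (Π × K) ∩ (G × I)) ⊆ E · Λ · Π. -/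
open Pointwise

/-- **General descent principle** (Proposition 1.2 / 2.12): for a generalized
cut-and-project scheme `(G, H, Γ)` with window `W` and model set
`Λ = π_G((G × W) ∩ Γ)`, for all compact `I, K ⊆ H` there are finite
`E, F ⊆ π_G(Γ)` such that for every `U ⊆ G`,
`π_G(Γ·(U × K) ∩ (G × I)) ⊆ Λ·F·U` and `⊆ E·Λ·U`. -/
theorem general_descent_principle
    {G H : Type*} [Group G] [TopologicalSpace G] [IsTopologicalGroup G]
    [Group H] [TopologicalSpace H] [IsTopologicalGroup H]
    (Γ : Subgroup (G × H)) (hΓdisc : DiscreteTopology Γ)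
    (hΓinj : Set.InjOn Prod.fst (Γ : Set (G × H)))
    (hΓdense : Dense (Prod.snd '' (Γ : Set (G × H))))
    (W : Set H) (hWcompact : IsCompact W) (hWsymm : W⁻¹ = W)
    (hWnhds : W ∈ nhds (1 : H)) :
    ∀ I K : Set H, IsCompact I → IsCompact K →
      ∃ E F : Set G, E.Finite ∧ F.Finite ∧
        E ⊆ Prod.fst '' (Γ : Set (G × H)) ∧
        F ⊆ Prod.fst '' (Γ : Set (G × H)) ∧
        ∀ U : Set G,
          Prod.fst '' ((Γ : Set (G × H)) * (U ×ˢ K) ∩ (Set.univ ×ˢ I)) ⊆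
            (Prod.fst '' ((Set.univ ×ˢ W) ∩ (Γ : Set (G × H)))) * F * U ∧
          Prod.fst '' ((Γ : Set (G × H)) * (U ×ˢ K) ∩ (Set.univ ×ˢ I)) ⊆
            E * (Prod.fst '' ((Set.univ ×ˢ W) ∩ (Γ : Set (G × H)))) * U := by
  classical
  intro I K hI hK
  set V := interior W with hVdef
  have hVopen : IsOpen V := isOpen_interior
  have h1V : (1 : H) ∈ V := mem_interior_iff_mem_nhds.mpr hWnhds
  have hVW : V ⊆ W := interior_subset
  have hC : IsCompact (I * K⁻¹) := hI.mul hK.inv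
  -- general finite-subcover helper
  have key : ∀ (U1 : Γ → Set H), (∀ γ, IsOpen (U1 γ)) →
      (∀ c ∈ I * K⁻¹, ∃ γ : Γ, c ∈ U1 γ) →
      ∃ t : Finset Γ, ∀ c ∈ I * K⁻¹, ∃ γ ∈ t, c ∈ U1 γ := by
    intro U1 hopen hcov
    obtain ⟨t, ht⟩ := hC.elim_finite_subcover U1 hopen
      (fun c hc => Set.mem_iUnion.mpr (hcov c hc))
    exact ⟨t, fun c hc => by simpa using ht hc⟩
  -- cover for the `F` (right) version
  obtain ⟨tF, htF⟩ := key (fun γ => (fun h => h * ((γ : G × H).2)⁻¹) ⁻¹' V)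
    (fun γ => hVopen.preimage (continuous_id.mul continuous_const))
    (by
      intro c hc
      have hopen : IsOpen ((fun h : H => c * h⁻¹) ⁻¹' V) :=
        hVopen.preimage (continuous_const.mul continuous_inv)
      have hne : ((fun h : H => c * h⁻¹) ⁻¹' V).Nonempty :=
        ⟨c, by simpa using h1V⟩
      obtain ⟨x, hxΓ, hxV⟩ := hΓdense.exists_mem_open hopen hne
      obtain ⟨γ, hγΓ, rfl⟩ := hxΓ
      exact ⟨⟨γ, hγΓ⟩, hxV⟩)
  -- cover for the `E` (left) version
  obtain ⟨tE, htE⟩ := key (fun γ => (fun h => ((γ : G × H).2)⁻¹ * h) ⁻¹' V)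
    (fun γ => hVopen.preimage (continuous_const.mul continuous_id))
    (by
      intro c hc
      have hopen : IsOpen ((fun h : H => h⁻¹ * c) ⁻¹' V) :=
        hVopen.preimage (continuous_inv.mul continuous_const)
      have hne : ((fun h : H => h⁻¹ * c) ⁻¹' V).Nonempty :=
        ⟨c, by simpa using h1V⟩
      obtain ⟨x, hxΓ, hxV⟩ := hΓdense.exists_mem_open hopen hne
      obtain ⟨γ, hγΓ, rfl⟩ := hxΓ
      exact ⟨⟨γ, hγΓ⟩, hxV⟩)
  refine ⟨↑(tE.image (fun γ : Γ => (γ : G × H).1)),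
    ↑(tF.image (fun γ : Γ => (γ : G × H).1)),
    (tE.image _).finite_toSet, (tF.image _).finite_toSet, ?_, ?_, ?_⟩
  · intro g hg
    simp only [Finset.coe_image, Set.mem_image, Finset.mem_coe] at hg
    obtain ⟨γ, _, rfl⟩ := hg
    exact ⟨(γ : G × H), γ.2, rfl⟩
  · intro g hg
    simp only [Finset.coe_image, Set.mem_image, Finset.mem_coe] at hg
    obtain ⟨γ, _, rfl⟩ := hg
    exact ⟨(γ : G × H), γ.2, rfl⟩
  intro U
  constructor
  · rintro x ⟨p, ⟨hpmul, hpI⟩, rfl⟩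
    rw [Set.mem_mul] at hpmul
    obtain ⟨a, haΓ, b, hb, rfl⟩ := hpmul
    obtain ⟨hbU, hbK⟩ := hb
    have hI2 : (a * b).2 ∈ I := hpI.2
    have haC : a.2 ∈ I * K⁻¹ := by
      have : a.2 = (a.2 * b.2) * b.2⁻¹ := by group
      rw [this]
      exact Set.mul_mem_mul hI2 (Set.inv_mem_inv.mpr hbK)
    obtain ⟨δ, hδt, hδV⟩ := htF a.2 haC
    have hlamG : a * (↑δ)⁻¹ ∈ (Γ : Set (G × H)) := Γ.mul_mem haΓ (Γ.inv_mem δ.2)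
    have hlamL : (a * (↑δ)⁻¹).1 ∈ Prod.fst '' ((Set.univ ×ˢ W) ∩ (Γ : Set (G × H))) :=
      ⟨a * (↑δ)⁻¹, ⟨⟨Set.mem_univ _, hVW (by simpa using hδV)⟩, hlamG⟩, rfl⟩
    have hδF : ((δ : G × H)).1 ∈ (↑(tF.image (fun γ : Γ => (γ : G × H).1)) : Set G) := by
      simp only [Finset.coe_image, Set.mem_image, Finset.mem_coe]
      exact ⟨δ, hδt, rfl⟩
    have : (a * b).1 = ((a * (↑δ)⁻¹).1 * ((δ : G × H)).1) * b.1 := by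
      simp [Prod.fst_mul, Prod.fst_inv, mul_assoc]
    rw [this]
    exact Set.mul_mem_mul (Set.mul_mem_mul hlamL hδF) hbU
  · rintro x ⟨p, ⟨hpmul, hpI⟩, rfl⟩
    rw [Set.mem_mul] at hpmul
    obtain ⟨a, haΓ, b, hb, rfl⟩ := hpmul
    obtain ⟨hbU, hbK⟩ := hb
    have hI2 : (a * b).2 ∈ I := hpI.2
    have haC : a.2 ∈ I * K⁻¹ := by
      have : a.2 = (a.2 * b.2) * b.2⁻¹ := by group
      rw [this]
      exact Set.mul_mem_mul hI2 (Set.inv_mem_inv.mpr hbK)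
    obtain ⟨δ, hδt, hδV⟩ := htE a.2 haC
    have hlamG : (↑δ)⁻¹ * a ∈ (Γ : Set (G × H)) := Γ.mul_mem (Γ.inv_mem δ.2) haΓ
    have hlamL : ((↑δ)⁻¹ * a).1 ∈ Prod.fst '' ((Set.univ ×ˢ W) ∩ (Γ : Set (G × H))) :=
      ⟨(↑δ)⁻¹ * a, ⟨⟨Set.mem_univ _, hVW (by simpa using hδV)⟩, hlamG⟩, rfl⟩
    have hδE : ((δ : G × H)).1 ∈ (↑(tE.image (fun γ : Γ => (γ : G × H).1)) : Set G) := by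
      simp only [Finset.coe_image, Set.mem_image, Finset.mem_coe]
      exact ⟨δ, hδt, rfl⟩
    have : (a * b).1 = (((δ : G × H)).1 * ((↑δ)⁻¹ * a).1) * b.1 := by
      simp [Prod.fst_mul, Prod.fst_inv, mul_assoc]
    rw [this]
    exact Set.mul_mem_mul (Set.mul_mem_mul hδE hlamL) hbU
end

section
/- Let G and H be topological groups and let Γ and Γ' be discrete subgroups of G × H, each of which is mapped injectively to G by the coordinate projection π_G and has dense image in H under the coordinate projection π_H. Assume Γ and Γ' are commensurable, i.e. Γ ∩ Γ' has finite index in both Γ and Γ'. Let W, W' ⊆ H be compact symmetric subsets of H containing the identity in their interiors. Then the model sets Λ := π_G((G × W) ∩ Γ) and Λ' := π_G((G × W') ∩ Γ') are commensurable subsets of G: there exist finite subsets F₁, F₂ ⊆ G such that Λ ⊆ Λ' · F₁ and Λ' ⊆ Λ · F₂. -/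
open Pointwise

/-- Key one-sided lemma: if `Γ ∩ Γ'` has finite index in `Γ`, the projection of `Γ'`
to `H` is dense, `W` is compact and `W'` has `1` in its interior, then the model set
of `(Γ, W)` is covered by finitely many right translates of the model set of `(Γ', W')`. -/
lemma model_set_subset_aux
    {G H : Type*} [Group G] [Group H] [TopologicalSpace H] [IsTopologicalGroup H]
    (Γ Γ' : Subgroup (G × H))
    (hdense' : Dense (Prod.snd '' (Γ' : Set (G × H))))
    (hidx : (Γ'.subgroupOf Γ).index ≠ 0)
    (W W' : Set H) (hWc : IsCompact W) (hW'int : (1 : H) ∈ interior W') :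
    ∃ F : Set G, F.Finite ∧
      Prod.fst '' ((Set.univ ×ˢ W) ∩ (Γ : Set (G × H))) ⊆
        (Prod.fst '' ((Set.univ ×ˢ W') ∩ (Γ' : Set (G × H)))) * F := by
  have hfinQ : Finite (Γ ⧸ Γ'.subgroupOf Γ) := (Nat.card_ne_zero.mp hidx).2
  set T : Set Γ := Set.range (fun q : Γ ⧸ Γ'.subgroupOf Γ => Quotient.out q) with hT
  have hTfin : T.Finite := Set.finite_range _
  set K : Set H := ⋃ t ∈ T, (fun h => h * ((t : G × H).2)) '' W with hK
  have hKc : IsCompact K :=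
    hTfin.isCompact_biUnion (fun t _ => hWc.image (by fun_prop))
  have hcover : K ⊆ ⋃ γ' : Γ', interior W' * {((γ' : G × H).2)} := by
    intro k hk
    have hU : IsOpen ((interior W')⁻¹ * {k}) := isOpen_interior.inv.mul_right
    have hne : ((interior W')⁻¹ * {k}).Nonempty := by
      refine ⟨k, ?_⟩
      have h1 : (1 : H) ∈ (interior W')⁻¹ := by
        rw [Set.mem_inv, inv_one]; exact hW'int
      simpa using Set.mul_mem_mul h1 (Set.mem_singleton k)
    obtain ⟨s, hsmem, hsU⟩ := hdense'.exists_mem_open hU hne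
    obtain ⟨γ'e, hγ'e, hγ'snd⟩ := hsmem
    obtain ⟨w, hw, k', hk', hwk⟩ := Set.mem_mul.mp hsU
    rw [Set.mem_singleton_iff] at hk'
    subst hk'
    refine Set.mem_iUnion.mpr ⟨⟨γ'e, hγ'e⟩, ?_⟩
    have hkw : k' = w⁻¹ * s := by rw [← hwk]; group
    refine Set.mem_mul.mpr ⟨w⁻¹, ?_, s, ?_, hkw.symm⟩
    · rw [Set.mem_inv] at hw; simpa using hw
    · simp [hγ'snd]
  obtain ⟨I, hI⟩ := hKc.elim_finite_subcover
    (fun γ' : Γ' => interior W' * {((γ' : G × H).2)})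
    (fun γ' => isOpen_interior.mul_right) hcover
  refine ⟨(fun p : Γ' × Γ => ((p.1 : G × H) * (p.2 : G × H)⁻¹).1) '' ((I : Set Γ') ×ˢ T),
    ((I.finite_toSet.prod hTfin).image _), ?_⟩
  rintro x ⟨p, ⟨⟨-, hpW⟩, hpΓ⟩, rfl⟩
  set γ : Γ := ⟨p, hpΓ⟩ with hγ
  set t : Γ := Quotient.out (QuotientGroup.mk (γ⁻¹) : Γ ⧸ Γ'.subgroupOf Γ) with ht
  have htT : t ∈ T := ⟨_, rfl⟩
  have hδ : (γ * t : Γ) ∈ Γ'.subgroupOf Γ := by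
    have hout : (QuotientGroup.mk t : Γ ⧸ Γ'.subgroupOf Γ) = QuotientGroup.mk γ⁻¹ :=
      Quotient.out_eq _
    have := (QuotientGroup.eq (s := Γ'.subgroupOf Γ)).mp hout
    have h2 := inv_mem this
    simpa [mul_comm] using h2
  have hδ' : ((γ * t : Γ) : G × H) ∈ Γ' := hδ
  have hδK : ((γ * t : Γ) : G × H).2 ∈ K := by
    refine Set.mem_biUnion htT ⟨p.2, hpW, ?_⟩
    simp [hγ]
  obtain ⟨i, hiI, hi⟩ := Set.mem_iUnion₂.mp (hI hδK)
  obtain ⟨w, hw, si, hsi, hwsi⟩ := Set.mem_mul.mp hi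
  rw [Set.mem_singleton_iff] at hsi
  subst hsi
  set δe : G × H := ((γ * t : Γ) : G × H) with hδe
  set η : G × H := δe * (i : G × H)⁻¹ with hη
  have hηΓ' : η ∈ Γ' := mul_mem hδ' (inv_mem i.2)
  have hηW' : η.2 ∈ W' := by
    have : η.2 = w := by
      rw [hη]
      simp only [Prod.snd_mul, Prod.snd_inv]
      rw [← hwsi]; group
    rw [this]; exact interior_subset hw
  have hηΛ : η.1 ∈ Prod.fst '' ((Set.univ ×ˢ W') ∩ (Γ' : Set (G × H))) :=
    ⟨η, ⟨⟨Set.mem_univ _, hηW'⟩, hηΓ'⟩, rfl⟩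
  have hfF : ((i : G × H) * (t : G × H)⁻¹).1 ∈
      (fun p : Γ' × Γ => ((p.1 : G × H) * (p.2 : G × H)⁻¹).1) '' ((I : Set Γ') ×ˢ T) :=
    ⟨(i, t), ⟨hiI, htT⟩, rfl⟩
  have hxeq : p.1 = η.1 * ((i : G × H) * (t : G × H)⁻¹).1 := by
    rw [hη, hδe]
    simp only [Prod.fst_mul, Prod.fst_inv, Subgroup.coe_mul, Prod.fst_mul]
    group
    rfl
  rw [hxeq]
  exact Set.mul_mem_mul hηΛ hfF

/-- Model sets of commensurable lattices and arbitrary windows are commensurable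
subsets of `G` (Corollary 2.14 of the paper). -/
theorem model_sets_commensurable
    {G H : Type*} [Group G] [TopologicalSpace G] [IsTopologicalGroup G]
    [Group H] [TopologicalSpace H] [IsTopologicalGroup H]
    (Γ Γ' : Subgroup (G × H))
    (hΓdisc : DiscreteTopology Γ) (hΓ'disc : DiscreteTopology Γ')
    (hinj : Set.InjOn Prod.fst (Γ : Set (G × H)))
    (hinj' : Set.InjOn Prod.fst (Γ' : Set (G × H)))
    (hdense : Dense (Prod.snd '' (Γ : Set (G × H))))
    (hdense' : Dense (Prod.snd '' (Γ' : Set (G × H))))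
    (hcomm : Subgroup.Commensurable Γ Γ')
    (W W' : Set H)
    (hWc : IsCompact W) (hWs : W⁻¹ = W) (hWint : (1 : H) ∈ interior W)
    (hW'c : IsCompact W') (hW's : W'⁻¹ = W') (hW'int : (1 : H) ∈ interior W') :
    ∃ F₁ F₂ : Set G, F₁.Finite ∧ F₂.Finite ∧
      Prod.fst '' ((Set.univ ×ˢ W) ∩ (Γ : Set (G × H))) ⊆
        (Prod.fst '' ((Set.univ ×ˢ W') ∩ (Γ' : Set (G × H)))) * F₁ ∧
      Prod.fst '' ((Set.univ ×ˢ W') ∩ (Γ' : Set (G × H))) ⊆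
        (Prod.fst '' ((Set.univ ×ˢ W) ∩ (Γ : Set (G × H)))) * F₂ := by
  obtain ⟨F₁, hF₁fin, hF₁⟩ :=
    model_set_subset_aux Γ Γ' hdense' hcomm.2 W W' hWc hW'int
  obtain ⟨F₂, hF₂fin, hF₂⟩ :=
    model_set_subset_aux Γ' Γ hdense hcomm.1 W' W hW'c hWint
  exact ⟨F₁, F₂, hF₁fin, hF₂fin, hF₁, hF₂⟩
end

section
/- Let G and H be topological groups and let Γ be a discrete subgroup of G × H such that the coordinate projection π_G : G × H → G is injective on Γ and the image of Γ under the coordinate projection π_H : G × H → H is dense in H. Let W ⊆ H be a compact symmetric subset containing the identity in its interior. Then the generalized model set Λ := π_G((G × W) ∩ Γ) is an approximate subgroup of G: Λ = Λ⁻¹, the identity of G lies in Λ, and there exists a finite subset F ⊆ G with Λ · Λ ⊆ Λ · F. -/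
open Pointwise

/-- A generalized model set is an approximate subgroup of the ambient group
(Lemma 2.11 of the paper). -/
theorem model_set_is_approximate_subgroup
    {G H : Type*} [Group G] [TopologicalSpace G] [IsTopologicalGroup G]
    [Group H] [TopologicalSpace H] [IsTopologicalGroup H]
    (Γ : Subgroup (G × H)) (hΓdisc : DiscreteTopology Γ)
    (hinj : Set.InjOn Prod.fst (Γ : Set (G × H)))
    (hdense : Dense (Prod.snd '' (Γ : Set (G × H))))
    (W : Set H) (hWc : IsCompact W) (hWs : W⁻¹ = W)
    (hWint : (1 : H) ∈ interior W) :
    (Prod.fst '' ((Set.univ ×ˢ W) ∩ (Γ : Set (G × H)))) =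
      (Prod.fst '' ((Set.univ ×ˢ W) ∩ (Γ : Set (G × H))))⁻¹ ∧
    (1 : G) ∈ Prod.fst '' ((Set.univ ×ˢ W) ∩ (Γ : Set (G × H))) ∧
    ∃ F : Set G, F.Finite ∧
      (Prod.fst '' ((Set.univ ×ˢ W) ∩ (Γ : Set (G × H)))) *
          (Prod.fst '' ((Set.univ ×ˢ W) ∩ (Γ : Set (G × H)))) ⊆
        (Prod.fst '' ((Set.univ ×ˢ W) ∩ (Γ : Set (G × H)))) * F := by
  set Λ : Set G := Prod.fst '' ((Set.univ ×ˢ W) ∩ (Γ : Set (G × H))) with hΛ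
  have hmem : ∀ γ : G × H, γ ∈ Γ → γ.2 ∈ W → γ.1 ∈ Λ := by
    intro γ hγ hw
    exact ⟨γ, ⟨⟨trivial, hw⟩, hγ⟩, rfl⟩
  refine ⟨?_, ?_, ?_⟩
  · ext g
    constructor
    · rintro ⟨γ, ⟨⟨-, hw⟩, hγ⟩, rfl⟩
      refine Set.mem_inv.2 (hmem γ⁻¹ (inv_mem hγ) ?_)
      rw [← hWs]; exact Set.inv_mem_inv.2 hw
    · intro hg
      obtain ⟨γ, ⟨⟨-, hw⟩, hγ⟩, hγ1⟩ := Set.mem_inv.1 hg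
      have := hmem γ⁻¹ (inv_mem hγ) (by rw [← hWs]; exact Set.inv_mem_inv.2 hw)
      simpa [hγ1, Prod.fst_inv] using this
  · exact hmem 1 (one_mem Γ) (interior_subset hWint)
  · -- cover W * W by finitely many (interior W) * {snd γ}
    have hWW : IsCompact (W * W) := hWc.mul hWc
    have hcov : W * W ⊆ ⋃ γ : Γ, (interior W) * {(γ : G × H).2} := by
      intro x hx
      have hopen : IsOpen ((interior W) * {x} : Set H) := isOpen_interior.mul_right
      have hne : ((interior W) * {x} : Set H).Nonempty :=
        ⟨x, ⟨1, hWint, x, rfl, one_mul x⟩⟩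
      obtain ⟨y, hy, hyU⟩ := hdense.exists_mem_open hopen hne
      obtain ⟨γ, hγ, rfl⟩ := hy
      refine Set.mem_iUnion.2 ⟨⟨γ, hγ⟩, ?_⟩
      obtain ⟨w, hw, z, hz, hwz⟩ := hyU
      rcases hz with rfl
      -- γ.2 = w * x, so x = w⁻¹ * γ.2 with w⁻¹ ∈ interior W
      refine ⟨w⁻¹, ?_, γ.2, rfl, ?_⟩
      · have hsub : (interior W)⁻¹ ⊆ interior W :=
          interior_maximal (by intro x hx; rw [← hWs, Set.mem_inv]; exact interior_subset (Set.mem_inv.1 hx))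
            isOpen_interior.inv
        exact hsub (Set.inv_mem_inv.2 hw)
      · rw [← hwz]; group
    obtain ⟨t, ht⟩ := hWW.elim_finite_subcover _
      (fun γ : Γ => isOpen_interior.mul_right) hcov
    refine ⟨(fun γ : Γ => (γ : G × H).1) '' t, (t.finite_toSet.image _), ?_⟩
    rintro g ⟨a, ha, b, hb, rfl⟩
    obtain ⟨γ, ⟨⟨-, hwa⟩, hγ⟩, rfl⟩ := ha
    obtain ⟨δ, ⟨⟨-, hwb⟩, hδ⟩, rfl⟩ := hb
    have hxWW : γ.2 * δ.2 ∈ W * W := Set.mul_mem_mul hwa hwb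
    obtain ⟨i, hit, hi⟩ := Set.mem_iUnion₂.1 (ht hxWW)
    obtain ⟨w, hw, z, hz, hwz⟩ := hi
    rcases hz with rfl
    -- γ.2 * δ.2 = w * i.2 with w ∈ interior W
    have hmemΓ : γ * δ * (i : G × H)⁻¹ ∈ Γ :=
      mul_mem (mul_mem hγ hδ) (inv_mem i.2)
    have hsnd : (γ * δ * (i : G × H)⁻¹).2 ∈ W := by
      have : (γ * δ * (i : G × H)⁻¹).2 = γ.2 * δ.2 * (i : G × H).2⁻¹ := rfl
      rw [this, ← hwz]
      simpa using interior_subset hw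
    have hΛmem := hmem _ hmemΓ hsnd
    refine ⟨(γ * δ * (i : G × H)⁻¹).1, hΛmem, (i : G × H).1, ⟨i, hit, rfl⟩, ?_⟩
    have : (γ * δ * (i : G × H)⁻¹).1 = γ.1 * δ.1 * (i : G × H).1⁻¹ := rfl
    rw [this]; group
end

section
/- Let V be a real inner product space, let r ≥ 1, and let α₁,…,α_r and χ₁,…,χ_r be elements of V with χ_j ≠ 0 for every j. Assume: (i) for each index i there exists a linear isometry w_i of V onto itself such that w_i(α_i) = −α_i and w_i(χ_j) = χ_j for every j ≠ i; (ii) there exist real coefficients n_{ji} ≥ 0 (for 1 ≤ i, j ≤ r) with χ_j = Σ_{i=1}^r n_{ji} α_i for every j. Then ⟨α_i, χ_j⟩ = 0 whenever i ≠ j, and for every i one has ⟨α_i, χ_i⟩ > 0 and n_{ii} > 0. -/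
open RealInnerProductSpace

/-- Root/weight relations (Lemma 4.1 of the paper): if for each `i` there is a
linear isometry sending `α i` to `-α i` and fixing every `χ j` with `j ≠ i`,
and the `χ j` are nonnegative combinations of the `α i`, then `⟪α i, χ j⟫ = 0`
for `i ≠ j`, while `⟪α i, χ i⟫ > 0` and `n i i > 0`. -/
theorem root_weight_relations
    {V : Type*} [NormedAddCommGroup V] [InnerProductSpace ℝ V]
    {r : ℕ} (hr : 1 ≤ r)
    (α χ : Fin r → V) (hχ : ∀ j, χ j ≠ 0)
    (hrefl : ∀ i : Fin r, ∃ w : V ≃ₗᵢ[ℝ] V,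
      w (α i) = -α i ∧ ∀ j : Fin r, j ≠ i → w (χ j) = χ j)
    (n : Fin r → Fin r → ℝ) (hn : ∀ j i, 0 ≤ n j i)
    (hχα : ∀ j, χ j = ∑ i, n j i • α i) :
    (∀ i j : Fin r, i ≠ j → ⟪α i, χ j⟫ = 0) ∧
    (∀ i : Fin r, 0 < ⟪α i, χ i⟫ ∧ 0 < n i i) := by
  have horth : ∀ i j : Fin r, i ≠ j → ⟪α i, χ j⟫ = 0 := by
    intro i j hij
    obtain ⟨w, hw1, hw2⟩ := hrefl i
    have h := w.inner_map_map (α i) (χ j)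
    rw [hw1, hw2 j (Ne.symm hij), inner_neg_left] at h
    linarith
  refine ⟨horth, fun i => ?_⟩
  have hpos : 0 < ⟪χ i, χ i⟫ := lt_of_le_of_ne real_inner_self_nonneg (Ne.symm (inner_self_ne_zero.2 (hχ i)))
  have hsum : ⟪χ i, χ i⟫ = n i i * ⟪α i, χ i⟫ := by
    nth_rewrite 1 [hχα i]
    rw [sum_inner]
    rw [Finset.sum_eq_single i]
    · rw [real_inner_smul_left]
    · intro j _ hj
      rw [real_inner_smul_left, horth j i hj, mul_zero]
    · intro h; exact absurd (Finset.mem_univ i) h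
  rw [hsum] at hpos
  have hnii : 0 < n i i := by
    rcases (hn i i).lt_or_eq with h | h
    · exact h
    · rw [← h, zero_mul] at hpos; exact absurd hpos (lt_irrefl 0)
  rcases mul_pos_iff.mp hpos with h | h
  · exact ⟨h.2, hnii⟩
  · linarith [h.1]
end

section
/- Let V be a finite-dimensional real inner product space and let β̃₁,…,β̃_d : V → ℝ be affine forms, β̃_i(x) = ⟨b_i, x⟩ + c_i, whose linear parts b₁,…,b_d are linearly independent. Then there exist constants s₁,…,s_d > 0 with the following property. For t ∈ ℝ define Y_t := {x ∈ V : s_i β̃_i(x) ≤ t for all i}, its tip F_t := {x ∈ V : s_i β̃_i(x) = t for all i}, the normal cone NC_t := {v ∈ V : ⟨v, f − p⟩ ≥ 0 for all f ∈ F_t and all p ∈ Y_t}, and the normal set of the tip N_t := F_t + NC_t; similarly define Y₀ := {x : β̃_i(x) ≤ 0 for all i}, F₀ := {x : β̃_i(x) = 0 for all i}, NC₀ := {v : ⟨v, f − p⟩ ≥ 0 for all f ∈ F₀, p ∈ Y₀}, and N₀ := F₀ + NC₀. Then for every t > 0 the set N_t is contained in the topological interior of N₀. -/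
open Pointwise RealInnerProductSpace Matrix

section
variable {V : Type*} [NormedAddCommGroup V] [InnerProductSpace ℝ V]
  [FiniteDimensional ℝ V] {d : ℕ}

/-- auxiliary linear map sending coefficients to the combination -/
private def combo (b : Fin d → V) : (Fin d → ℝ) →ₗ[ℝ] V where
  toFun μ := ∑ i, μ i • b i
  map_add' μ ν := by simp [add_smul, Finset.sum_add_distrib]
  map_smul' r μ := by simp [Finset.smul_sum, mul_smul]

omit [FiniteDimensional ℝ V] in
private lemma exists_dual_family (b : Fin d → V) (hb : LinearIndependent ℝ b) :
    ∃ bs : Fin d → V,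
      (∀ i j, ⟪b i, bs j⟫ = if i = j then 1 else 0) ∧
      (∀ j (y : V), ⟪b j, ∑ i, ⟪bs i, y⟫ • b i⟫ = ⟪b j, y⟫) ∧
      (∀ i (y y' : V), (∀ m, ⟪b m, y⟫ = ⟪b m, y'⟫) → ⟪bs i, y⟫ = ⟪bs i, y'⟫) := by
  classical
  set G : Matrix (Fin d) (Fin d) ℝ := Matrix.of fun i j => ⟪b i, b j⟫ with hGdef
  have hGa : ∀ i j, G i j = ⟪b i, b j⟫ := fun i j => rfl
  have hGsymm : Gᵀ = G := by
    ext i j; simp [hGa, Matrix.transpose_apply, real_inner_comm]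
  have hmv : ∀ (v : Fin d → ℝ) i, (G *ᵥ v) i = ⟪b i, ∑ j, v j • b j⟫ := by
    intro v i
    rw [inner_sum]
    simp [Matrix.mulVec, dotProduct, real_inner_smul_right, hGa, mul_comm]
  have hdet : G.det ≠ 0 := by
    intro h
    obtain ⟨v, hv0, hv⟩ := Matrix.exists_mulVec_eq_zero_iff.mpr h
    apply hv0
    have key : ∑ i, v i • b i = 0 := by
      have h2 : ⟪∑ i, v i • b i, ∑ j, v j • b j⟫ = 0 := by
        rw [sum_inner]
        have : ∀ i, ⟪b i, ∑ j, v j • b j⟫ = 0 := fun i => by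
          rw [← hmv v i, hv]; rfl
        simp [real_inner_smul_left, this]
      exact inner_self_eq_zero.mp h2
    funext i
    exact Fintype.linearIndependent_iff.mp hb v key i
  have hunit : IsUnit G.det := isUnit_iff_ne_zero.mpr hdet
  have hGA : G * G⁻¹ = 1 := Matrix.mul_nonsing_inv G hunit
  have hAsymm : (G⁻¹)ᵀ = G⁻¹ := by rw [Matrix.transpose_nonsing_inv, hGsymm]
  refine ⟨fun j => ∑ m, G⁻¹ j m • b m, ?_, ?_, ?_⟩
  · intro i j
    rw [inner_sum]
    have : ∀ m, ⟪b i, G⁻¹ j m • b m⟫ = G i m * G⁻¹ m j := by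
      intro m
      rw [real_inner_smul_right, ← hGa]
      have h2 := congrFun (congrFun hAsymm m) j
      rw [Matrix.transpose_apply] at h2
      rw [← h2]; ring
    rw [Finset.sum_congr rfl fun m _ => this m, ← Matrix.mul_apply, hGA,
      Matrix.one_apply]
  · intro j y
    rw [inner_sum]
    have hbs : ∀ i, ⟪(∑ m, G⁻¹ i m • b m : V), y⟫ = ∑ m, G⁻¹ i m * ⟪b m, y⟫ := by
      intro i; rw [sum_inner]; simp [real_inner_smul_left]
    calc ∑ i, ⟪b j, ⟪(∑ m, G⁻¹ i m • b m : V), y⟫ • b i⟫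
        = ∑ i, (∑ m, G⁻¹ i m * ⟪b m, y⟫) * G j i := by
          refine Finset.sum_congr rfl fun i _ => ?_
          rw [real_inner_smul_right, hbs, ← hGa]
      _ = ∑ i, ∑ m, G j i * G⁻¹ i m * ⟪b m, y⟫ := by
          refine Finset.sum_congr rfl fun i _ => ?_
          rw [Finset.sum_mul]
          refine Finset.sum_congr rfl fun m _ => ?_; ring
      _ = ∑ m, (∑ i, G j i * G⁻¹ i m) * ⟪b m, y⟫ := by
          rw [Finset.sum_comm]
          refine Finset.sum_congr rfl fun m _ => ?_
          rw [Finset.sum_mul]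
      _ = ∑ m, (if j = m then (1:ℝ) else 0) * ⟪b m, y⟫ := by
          refine Finset.sum_congr rfl fun m _ => ?_
          rw [← Matrix.mul_apply, hGA, Matrix.one_apply]
      _ = ⟪b j, y⟫ := by simp [Finset.sum_ite_eq]
  · intro i y y' h
    rw [sum_inner, sum_inner]
    refine Finset.sum_congr rfl fun m _ => ?_
    rw [real_inner_smul_left, real_inner_smul_left, h m]

private lemma exists_pos_comb (b : Fin d → V) (hb : LinearIndependent ℝ b) :
    ∃ lam : Fin d → ℝ, (∀ i, 0 < lam i) ∧ ∀ i, 0 < ⟪b i, ∑ j, lam j • b j⟫ := by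
  classical
  obtain ⟨bs, hdual, -, -⟩ := exists_dual_family b hb
  set L := combo b with hLdef
  have hLa : ∀ μ, L μ = ∑ i, μ i • b i := fun μ => rfl
  have hker : LinearMap.ker L = ⊥ := by
    rw [LinearMap.ker_eq_bot']
    intro μ hμ
    funext i
    exact Fintype.linearIndependent_iff.mp hb μ hμ i
  have horth : IsClosed {μ : Fin d → ℝ | ∀ i, 0 ≤ μ i} := by
    have h : {μ : Fin d → ℝ | ∀ i, 0 ≤ μ i} = ⋂ i, {μ | 0 ≤ μ i} := by
      ext μ; simp [Set.mem_iInter]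
    rw [h]
    exact isClosed_iInter fun i => isClosed_le continuous_const (continuous_apply i)
  have horthconv : Convex ℝ {μ : Fin d → ℝ | ∀ i, 0 ≤ μ i} := by
    intro μ hμ ν hν a a' ha ha' _ i
    show 0 ≤ a * μ i + a' * ν i
    exact add_nonneg (mul_nonneg ha (hμ i)) (mul_nonneg ha' (hν i))
  set K : Set V := L '' {μ | ∀ i, 0 ≤ μ i} with hK
  have hKclosed : IsClosed K :=
    (LinearMap.isClosedEmbedding_of_injective hker).isClosedMap _ horth
  have hKconv : Convex ℝ K := horthconv.linear_image L
  have hKne : K.Nonempty := ⟨L 0, ⟨0, fun i => le_rfl, rfl⟩⟩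
  set u : V := ∑ j, bs j with hu
  have hbu : ∀ i, ⟪b i, u⟫ = 1 := by
    intro i; rw [hu, inner_sum]; simp [hdual]
  obtain ⟨p, hpK, hpmin⟩ :=
    exists_norm_eq_iInf_of_complete_convex hKne hKclosed.isComplete hKconv u
  have hproj := (norm_eq_iInf_iff_real_inner_le_zero hKconv hpK).mp hpmin
  obtain ⟨lam0, hlam0, hplam⟩ := hpK
  have hpbK : ∀ i, p + b i ∈ K := by
    intro i
    refine ⟨lam0 + fun j => if j = i then 1 else 0, fun j => ?_, ?_⟩
    · have := hlam0 j
      show 0 ≤ lam0 j + (if j = i then (1:ℝ) else 0)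
      split <;> linarith
    · rw [map_add, hplam]
      congr 1
      rw [hLa]
      simp [ite_smul]
  have hkey : ∀ i, 1 ≤ ⟪b i, p⟫ := by
    intro i
    have h := hproj (p + b i) (hpbK i)
    rw [add_sub_cancel_left, inner_sub_left] at h
    have hub : ⟪u, b i⟫ = 1 := by rw [real_inner_comm]; exact hbu i
    have h2 : 1 ≤ ⟪p, b i⟫ := by rw [hub] at h; linarith
    rwa [real_inner_comm] at h2
  set w1 : V := ∑ j, b j with hw1
  set C : ℝ := 1 + ∑ j, |⟪b j, w1⟫| with hC
  have hC0 : 0 < C := by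
    have : 0 ≤ ∑ j, |⟪b j, w1⟫| := Finset.sum_nonneg fun j _ => abs_nonneg _
    rw [hC]; linarith
  set ε : ℝ := C⁻¹ with hε'
  have hε : 0 < ε := inv_pos.mpr hC0
  have hbound : ∀ i, ε * |⟪b i, w1⟫| < 1 := by
    intro i
    have h1 : |⟪b i, w1⟫| ≤ ∑ j, |⟪b j, w1⟫| :=
      Finset.single_le_sum (f := fun j => |⟪b j, w1⟫|) (fun j _ => abs_nonneg _) (Finset.mem_univ i)
    have h2 : |⟪b i, w1⟫| < C := by rw [hC]; linarith
    calc ε * |⟪b i, w1⟫| < ε * C := by exact mul_lt_mul_of_pos_left h2 hε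
      _ = 1 := inv_mul_cancel₀ hC0.ne'
  refine ⟨fun i => lam0 i + ε, fun i => ?_, ?_⟩
  · show 0 < lam0 i + ε
    have := hlam0 i; linarith
  intro i
  have hsum : ∑ j, (lam0 j + ε) • b j = p + ε • w1 := by
    rw [← hplam, hLa, hw1]
    simp [add_smul, Finset.sum_add_distrib, Finset.smul_sum]
  rw [hsum, inner_add_right, real_inner_smul_right]
  have h3 : -(ε * |⟪b i, w1⟫|) ≤ ε * ⟪b i, w1⟫ := by
    have h4 := neg_abs_le (⟪b i, w1⟫)
    nlinarith
  have h5 := hkey i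
  have h6 := hbound i
  linarith

end

/-- Lemma 8.4 (lem:rescale): affine forms with linearly independent linear
parts can be rescaled by positive constants so that for every `t > 0` the
normal set of the tip of `Y_t = {x | s i * β̃ i x ≤ t}` is contained in the
interior of the normal set of the tip of `Y₀ = {x | β̃ i x ≤ 0}`. -/
theorem rescale_normal_sets
    {V : Type*} [NormedAddCommGroup V] [InnerProductSpace ℝ V]
    [FiniteDimensional ℝ V]
    {d : ℕ} (b : Fin d → V) (c : Fin d → ℝ)
    (hb : LinearIndependent ℝ b) :
    ∃ s : Fin d → ℝ, (∀ i, 0 < s i) ∧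
      ∀ t : ℝ, 0 < t →
        ({x : V | ∀ i, s i * (⟪b i, x⟫ + c i) = t} +
            {v : V | ∀ f ∈ {x : V | ∀ i, s i * (⟪b i, x⟫ + c i) = t},
              ∀ p ∈ {x : V | ∀ i, s i * (⟪b i, x⟫ + c i) ≤ t},
                0 ≤ ⟪v, f - p⟫}) ⊆
          interior
            ({x : V | ∀ i, ⟪b i, x⟫ + c i = 0} +
              {v : V | ∀ f ∈ {x : V | ∀ i, ⟪b i, x⟫ + c i = 0},
                ∀ p ∈ {x : V | ∀ i, ⟪b i, x⟫ + c i ≤ 0},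
                  0 ≤ ⟪v, f - p⟫}) := by
  classical
  obtain ⟨bs, hdual, hproj2, hdep⟩ := exists_dual_family b hb
  obtain ⟨lam, hlam, hlamb⟩ := exists_pos_comb b hb
  set w : V := ∑ j, lam j • b j with hw
  have hσ : ∀ i, 0 < ⟪b i, w⟫ := hlamb
  set x₀ : V := ∑ j, (-(c j)) • bs j with hx₀def
  have hx₀ : ∀ i, ⟪b i, x₀⟫ + c i = 0 := by
    intro i
    rw [hx₀def, inner_sum]
    have h : ∀ j, ⟪b i, (-(c j)) • bs j⟫ = if i = j then -(c j) else 0 := by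
      intro j
      rw [real_inner_smul_right, hdual i j]
      split <;> ring
    rw [Finset.sum_congr rfl fun j _ => h j, Finset.sum_ite_eq Finset.univ i]
    simp
  refine ⟨fun i => (⟪b i, w⟫)⁻¹, fun i => inv_pos.mpr (hσ i), ?_⟩
  intro t ht
  set O : Set V := {x | ∀ i, 0 < ⟪bs i, x - x₀⟫} with hO
  have hOopen : IsOpen O := by
    have h : O = ⋂ i, {x : V | 0 < ⟪bs i, x - x₀⟫} := by
      ext x; simp [hO, Set.mem_iInter]
    rw [h]
    refine isOpen_iInter_of_finite fun i => ?_
    exact isOpen_lt continuous_const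
      (Continuous.inner continuous_const (continuous_id.sub continuous_const))
  have hOsub : O ⊆
      ({x : V | ∀ i, ⟪b i, x⟫ + c i = 0} +
        {v : V | ∀ f ∈ {x : V | ∀ i, ⟪b i, x⟫ + c i = 0},
          ∀ p ∈ {x : V | ∀ i, ⟪b i, x⟫ + c i ≤ 0},
            0 ≤ ⟪v, f - p⟫}) := by
    intro x hx
    rw [hO, Set.mem_setOf_eq] at hx
    refine Set.mem_add.mpr
      ⟨x - ∑ i, ⟪bs i, x - x₀⟫ • b i, ?_, ∑ i, ⟪bs i, x - x₀⟫ • b i, ?_, by abel⟩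
    · intro j
      have h1 : ⟪b j, ∑ i, ⟪bs i, x - x₀⟫ • b i⟫ = ⟪b j, x - x₀⟫ := hproj2 j (x - x₀)
      rw [inner_sub_right, h1, inner_sub_right]
      have h2 := hx₀ j
      linarith
    · intro f' hf' p' hp'
      rw [sum_inner]
      refine Finset.sum_nonneg fun i _ => ?_
      rw [real_inner_smul_left]
      refine mul_nonneg (hx i).le ?_
      rw [inner_sub_right]
      have h1 := hf' i
      have h2 := hp' i
      linarith
  intro z hz
  obtain ⟨f, hf, v, hv, rfl⟩ := Set.mem_add.mp hz
  have hfi : ∀ i, ⟪b i, f⟫ + c i = t * ⟪b i, w⟫ := by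
    intro i
    have h : (⟪b i, w⟫)⁻¹ * (⟪b i, f⟫ + c i) = t := hf i
    have hne : ⟪b i, w⟫ ≠ 0 := (hσ i).ne'
    field_simp at h
    linarith
  apply interior_maximal hOsub hOopen
  rw [hO, Set.mem_setOf_eq]
  intro i
  have h1 : ⟪bs i, f + v - x₀⟫ = ⟪bs i, f - x₀⟫ + ⟪bs i, v⟫ := by
    rw [show f + v - x₀ = (f - x₀) + v by abel, inner_add_right]
  have h2 : ⟪bs i, f - x₀⟫ = t * lam i := by
    have ha : ∀ m, ⟪b m, f - x₀⟫ = ⟪b m, t • w⟫ := by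
      intro m
      rw [inner_sub_right, real_inner_smul_right]
      have e1 := hx₀ m
      have e2 := hfi m
      linarith
    rw [hdep i (f - x₀) (t • w) ha, real_inner_smul_right]
    have hbsw : ⟪bs i, w⟫ = lam i := by
      rw [hw, inner_sum]
      have h : ∀ j, ⟪bs i, lam j • b j⟫ = if j = i then lam j else 0 := by
        intro j
        rw [real_inner_smul_right, real_inner_comm, hdual j i]
        split <;> ring
      rw [Finset.sum_congr rfl fun j _ => h j, Finset.sum_ite_eq' Finset.univ i lam]
      simp
    rw [hbsw]
  have h3 : 0 ≤ ⟪bs i, v⟫ := by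
    have hpY : ∀ j, (⟪b j, w⟫)⁻¹ * (⟪b j, f - bs i⟫ + c j) ≤ t := by
      intro j
      rw [inner_sub_right, hdual j i]
      have hσj := hσ j
      have hne : ⟪b j, w⟫ ≠ 0 := hσj.ne'
      have hfj := hfi j
      set q : ℝ := if j = i then 1 else 0 with hq'
      have hq : 0 ≤ q := by rw [hq']; split <;> norm_num
      have e1 : (⟪b j, w⟫)⁻¹ * (⟪b j, f⟫ - q + c j) = t - (⟪b j, w⟫)⁻¹ * q := by
        rw [show ⟪b j, f⟫ - q + c j = t * ⟪b j, w⟫ - q by linarith]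
        field_simp
      rw [e1]
      have e2 : 0 ≤ (⟪b j, w⟫)⁻¹ * q := mul_nonneg (inv_pos.mpr hσj).le hq
      linarith
    have h4 : 0 ≤ ⟪v, f - (f - bs i)⟫ := hv f hf (f - bs i) hpY
    rw [show f - (f - bs i) = bs i by abel] at h4
    rwa [real_inner_comm] at h4
  rw [h1, h2]
  have h5 : 0 < t * lam i := mul_pos ht (hlam i)
  linarith
end

section
/- Let V be a finite-dimensional real inner product space and let C ⊆ V be a generalized linear cone, i.e. C = ⋂_{i=1}^n {x ∈ V : ⟨u_i, x⟩ ≤ 0} for finitely many vectors u₁,…,u_n ∈ V. Let (N_t)_{t∈ℝ} and (Z_t)_{t∈ℝ} be two properly nested families of generalized cones modeled on C: that is, there are points a_t, b_t ∈ V with N_t = a_t + C and Z_t = b_t + C, the unions ⋃_t N_t and ⋃_t Z_t equal V, the intersections ⋂_t N_t and ⋂_t Z_t are empty, and N_s ⊆ interior(N_t) and Z_s ⊆ interior(Z_t) whenever s < t. Then for every t ∈ ℝ there exists t₁ ∈ ℝ such that N_t ⊆ interior(Z_{t₁}). -/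
open Pointwise RealInnerProductSpace

/-- Lemma 8.3 (ConeInclusion): given two properly nested families of
generalized cones modeled on the same generalized linear cone `C`, every
member of the first family is contained in the interior of some member of
the second. -/
theorem nested_cone_inclusion
    {V : Type*} [NormedAddCommGroup V] [InnerProductSpace ℝ V]
    [FiniteDimensional ℝ V]
    {n : ℕ} (u : Fin n → V)
    (C : Set V) (hC : C = ⋂ i, {x : V | ⟪u i, x⟫ ≤ 0})
    (N Z : ℝ → Set V) (a b : ℝ → V)
    (hN : ∀ t, N t = a t +ᵥ C) (hZ : ∀ t, Z t = b t +ᵥ C)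
    (hNunion : ⋃ t, N t = Set.univ) (hZunion : ⋃ t, Z t = Set.univ)
    (hNinter : ⋂ t, N t = ∅) (hZinter : ⋂ t, Z t = ∅)
    (hNnested : ∀ s t : ℝ, s < t → N s ⊆ interior (N t))
    (hZnested : ∀ s t : ℝ, s < t → Z s ⊆ interior (Z t)) :
    ∀ t : ℝ, ∃ t₁ : ℝ, N t ⊆ interior (Z t₁) := by
  -- C is closed under addition
  have hadd : ∀ x y, x ∈ C → y ∈ C → x + y ∈ C := by
    intro x y hx hy
    subst hC
    simp only [Set.mem_iInter, Set.mem_setOf_eq] at *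
    intro i
    have := inner_add_right (𝕜 := ℝ) (u i) x y
    rw [this]
    linarith [hx i, hy i]
  have h0 : (0 : V) ∈ C := by
    subst hC
    simp
  intro t
  -- a t ∈ N t
  have haN : a t ∈ N t := by
    rw [hN t]
    exact ⟨0, h0, by simp⟩
  -- find s with a t ∈ Z s
  have : a t ∈ ⋃ s, Z s := by rw [hZunion]; trivial
  obtain ⟨s, hs⟩ := Set.mem_iUnion.mp this
  refine ⟨s + 1, ?_⟩
  have hsub : N t ⊆ Z s := by
    rw [hZ s] at hs
    obtain ⟨c, hc, hceq⟩ := hs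
    intro x hx
    rw [hN t] at hx
    obtain ⟨c', hc', hceq'⟩ := hx
    rw [hZ s]
    refine ⟨c + c', hadd c c' hc hc', ?_⟩
    simp only [vadd_eq_add] at *
    rw [← hceq'] at *
    rw [← hceq]
    abel
  exact fun x hx => hZnested s (s + 1) (by linarith) (hsub hx)
end
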